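/- Let (R,m) be a Noetherian local ring of characteristic p > 0 with perfect residue field R/m. Then for any finitely generated R-module M and any submodule N ⊆ M, the Frobenius closure decomposes as N^F_M = N + N^Fsp_M. -/
import Mathlib


open TensorProduct

/-- `R` viewed as an `R`-algebra via the `e`-th iterate of the Frobenius endomorphism. -/
def FrobTwist (R : Type*) [CommRing R] (p : ℕ) [Fact p.Prime] [CharP R p] (_e : ℕ) :
    Type _ := R

instance (R : Type*) [CommRing R] (p : ℕ) [Fact p.Prime] [CharP R p] (e : ℕ) :
    CommRing (FrobTwist R p e) := ‹CommRing R›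

noncomputable instance (R : Type*) [CommRing R] (p : ℕ) [Fact p.Prime] [CharP R p] (e : ℕ) :
    Algebra R (FrobTwist R p e) := (iterateFrobenius R p e).toAlgebra

/-- The `e`-th Frobenius functor applied to the `R`-module `M`:
`F^e(M) = FrobTwist R p e ⊗[R] M`, a module over `FrobTwist R p e` (which is `R` as a ring). -/
def FrobModule (R : Type*) [CommRing R] (p : ℕ) [Fact p.Prime] [CharP R p]
    (M : Type*) [AddCommGroup M] [Module R M] (e : ℕ) : Type _ :=
  FrobTwist R p e ⊗[R] M

section
variable (R : Type*) [CommRing R] (p : ℕ) [Fact p.Prime] [CharP R p]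
  (M : Type*) [AddCommGroup M] [Module R M] (e : ℕ)

noncomputable instance : AddCommGroup (FrobModule R p M e) :=
  inferInstanceAs (AddCommGroup (FrobTwist R p e ⊗[R] M))

noncomputable instance : Module (FrobTwist R p e) (FrobModule R p M e) :=
  inferInstanceAs (Module (FrobTwist R p e) (FrobTwist R p e ⊗[R] M))

/-- The image `z^q := F^e(z)` of `z ∈ M` in `F^e(M)`. -/
noncomputable def frobMap (z : M) : FrobModule R p M e := (1 : FrobTwist R p e) ⊗ₜ[R] z

/-- The Frobenius power `N^{[q]}_M ⊆ F^e(M)` of a submodule `N ⊆ M`, `q = p^e`. -/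
noncomputable def frobPow (N : Submodule R M) : Submodule (FrobTwist R p e) (FrobModule R p M e) :=
  Submodule.span (FrobTwist R p e) (frobMap R p M e '' N)

/-- An ideal of `R`, regarded as an ideal of `FrobTwist R p e` (the same ring). -/
def idealTwist (I : Ideal R) : Ideal (FrobTwist R p e) := I

/-- The Frobenius closure `N^F_M` of a submodule `N ⊆ M`, as a set. -/
noncomputable def frobClSet (N : Submodule R M) : Set M :=
  {z | ∃ e : ℕ, frobMap R p M e z ∈ frobPow R p M e N}

/-- The special part of the Frobenius closure `N^{Fsp}_M`, as a set:
elements `z` with `z^q ∈ m·N^{[q]}_M` for some `q = p^e`. -/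
noncomputable def frobSpSet [IsLocalRing R] (N : Submodule R M) : Set M :=
  {z | ∃ e : ℕ, frobMap R p M e z ∈
    idealTwist R p e (IsLocalRing.maximalIdeal R) • frobPow R p M e N}

end

section Aux

variable {R : Type*} [CommRing R] {p : ℕ} [Fact p.Prime] [CharP R p]
  {M : Type*} [AddCommGroup M] [Module R M] {e : ℕ}

lemma frobMap_add (a b : M) :
    frobMap R p M e (a + b) = frobMap R p M e a + frobMap R p M e b :=
  TensorProduct.tmul_add _ _ _

lemma frobMap_sub (a b : M) :
    frobMap R p M e (a - b) = frobMap R p M e a - frobMap R p M e b :=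
  TensorProduct.tmul_sub _ _ _

lemma frobMap_smul (b : R) (c : FrobTwist R p e) (hc : c = iterateFrobenius R p e b) (x : M) :
    frobMap R p M e (b • x) = c • frobMap R p M e x := by
  subst hc
  show (1 : FrobTwist R p e) ⊗ₜ[R] (b • x) = _
  rw [TensorProduct.tmul_smul]
  exact (algebraMap_smul (FrobTwist R p e) b _).symm

lemma frobMap_sum {ι : Type*} (s : Finset ι) (v : ι → M) :
    frobMap R p M e (∑ i ∈ s, v i) = ∑ i ∈ s, frobMap R p M e (v i) :=
  TensorProduct.tmul_sum _ _ _

end Aux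

/-- (Special Frobenius closure decomposition.) Let `(R,m)` be Noetherian
local of characteristic `p > 0` with perfect residue field.  Then for any finitely
generated `R`-module `M` and submodule `N ⊆ M`, `N^F_M = N + N^{Fsp}_M`. -/
theorem frobCl_decomposition
    (R : Type*) [CommRing R] [IsNoetherianRing R] [IsLocalRing R]
    (p : ℕ) [Fact p.Prime] [CharP R p]
    [PerfectField (IsLocalRing.ResidueField R)]
    (M : Type*) [AddCommGroup M] [Module R M] [Module.Finite R M]
    (N : Submodule R M) :
    ∀ x : M, x ∈ frobClSet R p M N ↔
      ∃ y ∈ N, ∃ z ∈ frobSpSet R p M N, x = y + z := by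
  intro x
  constructor
  · rintro ⟨e, hx⟩
    haveI : CharP (IsLocalRing.ResidueField R) p := by
      refine (CharP.charP_iff_prime_eq_zero (Fact.out : p.Prime)).2 ?_
      rw [← map_natCast (IsLocalRing.residue R) p, CharP.cast_eq_zero, map_zero]
    haveI : ExpChar (IsLocalRing.ResidueField R) p := .prime Fact.out
    haveI : CharP (R ⧸ IsLocalRing.maximalIdeal R) p := ‹CharP (IsLocalRing.ResidueField R) p›
    haveI : ExpChar (R ⧸ IsLocalRing.maximalIdeal R) p := .prime Fact.out
    have root : ∀ a : R, ∃ b : R,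
        a - iterateFrobenius R p e b ∈ IsLocalRing.maximalIdeal R := by
      intro a
      obtain ⟨c, hc⟩ := (bijective_iterateFrobenius (IsLocalRing.ResidueField R) p e).2
        (IsLocalRing.residue R a)
      obtain ⟨b, rfl⟩ := IsLocalRing.residue_surjective (R := R) c
      refine ⟨b, Ideal.Quotient.eq_zero_iff_mem.1 ?_⟩
      have h2 : (IsLocalRing.residue R) (iterateFrobenius R p e b)
          = IsLocalRing.residue R a := by
        rw [iterateFrobenius_def, map_pow,
          ← iterateFrobenius_def (R := IsLocalRing.ResidueField R), hc]
      show IsLocalRing.residue R (a - iterateFrobenius R p e b) = 0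
      rw [map_sub, h2, sub_self]
    rw [frobPow, Submodule.mem_span_set'] at hx
    obtain ⟨n, f, g, hg⟩ := hx
    have hg2 : ∀ i, ∃ a, a ∈ N ∧ frobMap R p M e a = (g i : FrobModule R p M e) :=
      fun i => (g i).2
    choose xi hxiN hxieq using hg2
    choose bi hbi using fun i => root (f i)
    set ci : Fin n → FrobTwist R p e := fun i => iterateFrobenius R p e (bi i) with hci
    have hyN : (∑ i, bi i • xi i) ∈ N := Submodule.sum_mem _ fun i _ =>
      Submodule.smul_mem _ _ (hxiN i)
    refine ⟨∑ i, bi i • xi i, hyN, x - ∑ i, bi i • xi i, ⟨e, ?_⟩, by abel⟩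
    have hfx : frobMap R p M e x = ∑ i, f i • frobMap R p M e (xi i) := by
      rw [← hg]
      exact Finset.sum_congr rfl fun i _ => by rw [hxieq]
    have hfy : frobMap R p M e (∑ i, bi i • xi i)
        = ∑ i, ci i • frobMap R p M e (xi i) := by
      rw [frobMap_sum]
      exact Finset.sum_congr rfl fun i _ => frobMap_smul _ _ rfl _
    rw [frobMap_sub, hfx, hfy, ← Finset.sum_sub_distrib]
    have heq : ∀ i : Fin n, f i • frobMap R p M e (xi i)
        - ci i • frobMap R p M e (xi i)
        = (f i - ci i) • frobMap R p M e (xi i) :=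
      fun i => (sub_smul _ _ _).symm
    simp only [heq]
    refine Submodule.sum_mem _ fun i _ => Submodule.smul_mem_smul (hbi i) ?_
    exact Submodule.subset_span ⟨xi i, hxiN i, rfl⟩
  · rintro ⟨y, hy, z, ⟨e, hz⟩, rfl⟩
    refine ⟨e, ?_⟩
    rw [frobMap_add]
    refine Submodule.add_mem _ (Submodule.subset_span ⟨y, hy, rfl⟩) ?_
    exact Submodule.smul_le_right hz
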